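/- arXiv:1602.01214 — 3 statements merged into one kernel-verified Lean document; each statement's English description precedes it below -/
import Mathlib

section
/- Let R be an associative ring of prime characteristic p in which all commutators are central (i.e., [[a,b],c]=0 for all a,b,c). Then [a^p, b] = 0 for all a, b in R; that is, p-th powers are central. -/
/-- In an associative ring of prime characteristic `p` in which all commutators are
central, `p`-th powers are central: `[a^p, b] = 0` for all `a, b`. -/
theorem pow_p_central_of_central_commutators (R : Type*) [Ring R] (p : ℕ) (hp : p.Prime)
    [CharP R p]
    (h : ∀ a b c : R, (a * b - b * a) * c - c * (a * b - b * a) = 0)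
    (a b : R) :
    a ^ p * b - b * a ^ p = 0 := by
  have hc : ∀ x : R, (a * b - b * a) * x = x * (a * b - b * a) := fun x =>
    sub_eq_zero.mp (h a b x)
  have key : ∀ n : ℕ, a ^ (n + 1) * b - b * a ^ (n + 1) = (n + 1) • ((a * b - b * a) * a ^ n) := by
    intro n
    induction n with
    | zero => simp
    | succ n ih =>
      have h1 : a ^ (n + 2) = a * a ^ (n + 1) := by rw [pow_succ']
      have h2 : a ^ (n + 1) * b = b * a ^ (n + 1) + (n + 1) • ((a * b - b * a) * a ^ n) := by
        rw [← ih]; abel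
      have h3 : a * ((a * b - b * a) * a ^ n) = (a * b - b * a) * a ^ (n + 1) := by
        rw [← mul_assoc, ← hc a, mul_assoc, ← pow_succ']
      calc a ^ (n + 2) * b - b * a ^ (n + 2)
          = a * (a ^ (n + 1) * b) - b * (a * a ^ (n + 1)) := by rw [h1, mul_assoc]
        _ = a * (b * a ^ (n + 1)) + (n + 1) • (a * ((a * b - b * a) * a ^ n))
              - b * (a * a ^ (n + 1)) := by rw [h2]; rw [mul_add, mul_smul_comm]
        _ = (a * b - b * a) * a ^ (n + 1) + (n + 1) • ((a * b - b * a) * a ^ (n + 1)) := by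
              rw [h3]; noncomm_ring
        _ = (n + 2) • ((a * b - b * a) * a ^ (n + 1)) := by
              rw [succ_nsmul ((a * b - b * a) * a ^ (n + 1)) (n + 1)]; abel
  obtain ⟨k, hk⟩ := Nat.exists_eq_succ_of_ne_zero hp.ne_zero
  have hp0 : ((k + 1 : ℕ) : R) = 0 := by
    rw [← Nat.succ_eq_add_one, ← hk]; exact CharP.cast_eq_zero R p
  rw [hk, key k, nsmul_eq_mul, hp0, zero_mul]
end

section
/- Let F be a finite field with q elements of characteristic p > 2, and let E be the Grassmann algebra over F. Then x^{pq} = x^p for every x in E; equivalently, y^{pq} - y^p is a polynomial identity of E. -/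
noncomputable section GrassmannAux

open ExteriorAlgebra Submodule

variable {R : Type*} [CommRing R] {M : Type*} [AddCommGroup M] [Module R M]

/-- Words of length `k` in the generators of the exterior algebra. -/
def eaWord (R : Type*) [CommRing R] (M : Type*) [AddCommGroup M] [Module R M] (k : ℕ) :
    Set (ExteriorAlgebra R M) :=
  {x | ∃ l : List M, l.length = k ∧ x = (l.map (ι R)).prod}

theorem eaWord_mul {j k : ℕ} {x y : ExteriorAlgebra R M}
    (hx : x ∈ eaWord R M j) (hy : y ∈ eaWord R M k) : x * y ∈ eaWord R M (j + k) := by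
  obtain ⟨l, hl, rfl⟩ := hx
  obtain ⟨l', hl', rfl⟩ := hy
  exact ⟨l ++ l', by simp [hl, hl'], by simp⟩

theorem ι_mul_eaWord (m : M) (l : List M) :
    ι R m * (l.map (ι R)).prod
      = (-1 : R) ^ l.length • ((l.map (ι R)).prod * ι R m) := by
  induction l with
  | nil => simp
  | cons a t ih =>
    have swap : ι R m * ι R a = - (ι R a * ι R m) :=
      eq_neg_of_add_eq_zero_left (ι_add_mul_swap m a)
    simp only [List.map_cons, List.prod_cons, List.length_cons, pow_succ]
    rw [← mul_assoc, swap, neg_mul, mul_assoc, ih]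
    simp [mul_smul_comm, smul_smul, mul_comm, mul_assoc]

theorem eaWord_comm {j k : ℕ} {x y : ExteriorAlgebra R M}
    (hx : x ∈ eaWord R M j) (hy : y ∈ eaWord R M k) :
    x * y = (-1 : R) ^ (j * k) • (y * x) := by
  obtain ⟨l, rfl, rfl⟩ := hx
  obtain ⟨l', hl', rfl⟩ := hy
  induction l with
  | nil => simp
  | cons a t ih =>
    simp only [List.map_cons, List.prod_cons, List.length_cons]
    rw [mul_assoc, ih, mul_smul_comm, ← mul_assoc, ι_mul_eaWord, hl',
      smul_mul_assoc, smul_smul, mul_assoc, ← pow_add]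
    ring_nf

theorem eaWord_sq_zero {k : ℕ} {x : ExteriorAlgebra R M}
    (hx : x ∈ eaWord R M (k + 1)) : x * x = 0 := by
  obtain ⟨l, hl, rfl⟩ := hx
  cases l with
  | nil => simp at hl
  | cons a t =>
    simp only [List.map_cons, List.prod_cons]
    set P := (t.map (ι R)).prod with hP
    have h2 : P * ι R a = (-1 : R) ^ t.length • (ι R a * P) := by
      rw [ι_mul_eaWord, smul_smul, ← pow_add, Even.neg_one_pow ⟨t.length, rfl⟩, one_smul]
    calc ι R a * P * (ι R a * P) = ι R a * (P * ι R a) * P := by noncomm_ring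
      _ = ι R a * ((-1 : R) ^ t.length • (ι R a * P)) * P := by rw [h2]
      _ = (-1 : R) ^ t.length • (ι R a * ι R a * (P * P)) := by
          simp only [mul_smul_comm, smul_mul_assoc]; noncomm_ring
      _ = 0 := by rw [ι_sq_zero]; simp

/-- The span of the even-length (≥ 2) words. -/
def eaB (R : Type*) [CommRing R] (M : Type*) [AddCommGroup M] [Module R M] :
    Submodule R (ExteriorAlgebra R M) :=
  Submodule.span R (⋃ k, eaWord R M (2 * k + 2))

/-- The span of the odd-length words. -/
def eaO (R : Type*) [CommRing R] (M : Type*) [AddCommGroup M] [Module R M] :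
    Submodule R (ExteriorAlgebra R M) :=
  Submodule.span R (⋃ k, eaWord R M (2 * k + 1))

theorem span_mul_span_subset {S T U : Set (ExteriorAlgebra R M)}
    (h : ∀ x ∈ S, ∀ y ∈ T, x * y ∈ U) :
    ∀ b ∈ Submodule.span R S, ∀ c ∈ Submodule.span R T,
      b * c ∈ Submodule.span R U := by
  intro b hb c hc
  have hle : Submodule.span R S * Submodule.span R T ≤ Submodule.span R U := by
    rw [Submodule.span_mul_span]
    refine Submodule.span_le.mpr ?_
    rintro z hz
    rw [Set.mem_mul] at hz
    obtain ⟨x, hx, y, hy, rfl⟩ := hz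
    exact Submodule.subset_span (h x hx y hy)
  exact hle (Submodule.mul_mem_mul hb hc)

theorem eaB_mul_eaB {b b' : ExteriorAlgebra R M} (hb : b ∈ eaB R M) (hb' : b' ∈ eaB R M) :
    b * b' ∈ eaB R M := by
  refine span_mul_span_subset ?_ b hb b' hb'
  rintro x hx y hy
  simp only [Set.mem_iUnion] at hx hy ⊢
  obtain ⟨j, hx⟩ := hx; obtain ⟨k, hy⟩ := hy
  exact ⟨j + k + 1, by have := eaWord_mul hx hy; convert this using 2; ring⟩

theorem eaO_mul_eaO {b b' : ExteriorAlgebra R M} (hb : b ∈ eaO R M) (hb' : b' ∈ eaO R M) :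
    b * b' ∈ eaB R M := by
  refine span_mul_span_subset ?_ b hb b' hb'
  rintro x hx y hy
  simp only [Set.mem_iUnion] at hx hy ⊢
  obtain ⟨j, hx⟩ := hx; obtain ⟨k, hy⟩ := hy
  exact ⟨j + k, by have := eaWord_mul hx hy; convert this using 2; ring⟩

theorem eaB_mul_eaO {b b' : ExteriorAlgebra R M} (hb : b ∈ eaB R M) (hb' : b' ∈ eaO R M) :
    b * b' ∈ eaO R M := by
  refine span_mul_span_subset ?_ b hb b' hb'
  rintro x hx y hy
  simp only [Set.mem_iUnion] at hx hy ⊢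
  obtain ⟨j, hx⟩ := hx; obtain ⟨k, hy⟩ := hy
  exact ⟨j + k + 1, by have := eaWord_mul hx hy; convert this using 2; ring⟩

theorem eaO_mul_eaB {b b' : ExteriorAlgebra R M} (hb : b ∈ eaO R M) (hb' : b' ∈ eaB R M) :
    b * b' ∈ eaO R M := by
  refine span_mul_span_subset ?_ b hb b' hb'
  rintro x hx y hy
  simp only [Set.mem_iUnion] at hx hy ⊢
  obtain ⟨j, hx⟩ := hx; obtain ⟨k, hy⟩ := hy
  exact ⟨j + k + 1, by have := eaWord_mul hx hy; convert this using 2; ring⟩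

/-- Even elements are central. -/
theorem eaB_central {b : ExteriorAlgebra R M} (hb : b ∈ eaB R M) (y : ExteriorAlgebra R M) :
    Commute b y := by
  induction hb using Submodule.span_induction with
  | mem x hx =>
    simp only [Set.mem_iUnion] at hx
    obtain ⟨k, hx⟩ := hx
    induction y using ExteriorAlgebra.induction with
    | algebraMap r => exact (Algebra.commutes r x).symm
    | ι m =>
      have h1 : ι R m ∈ eaWord R M 1 := ⟨[m], rfl, by simp⟩
      have := eaWord_comm hx h1
      rw [Even.neg_one_pow ⟨k + 1, by ring⟩, one_smul] at this
      exact this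
    | mul u v hu hv => exact hu.mul_right hv
    | add u v hu hv => exact hu.add_right hv
  | zero => exact Commute.zero_left y
  | add u v _ _ hu hv => exact hu.add_left hv
  | smul a u _ hu => exact hu.smul_left a

/-- Words of odd length anticommute with odd elements. -/
theorem eaWord_odd_anticomm {k : ℕ} {x o' : ExteriorAlgebra R M}
    (hx : x ∈ eaWord R M (2 * k + 1)) (ho' : o' ∈ eaO R M) :
    x * o' = - (o' * x) := by
  induction ho' using Submodule.span_induction with
  | mem y hy =>
    simp only [Set.mem_iUnion] at hy
    obtain ⟨j, hy⟩ := hy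
    have := eaWord_comm hx hy
    rw [Odd.neg_one_pow ⟨2*k*j + k + j, by ring⟩, neg_smul, one_smul] at this
    exact this
  | zero => simp
  | add u v _ _ hu hv => rw [mul_add, hu, hv, add_mul]; abel
  | smul a u _ hu => rw [mul_smul_comm, hu, smul_mul_assoc]; simp

/-- Odd elements anticommute among themselves. -/
theorem eaO_anticomm {o o' : ExteriorAlgebra R M} (ho : o ∈ eaO R M) (ho' : o' ∈ eaO R M) :
    o * o' = - (o' * o) := by
  induction ho using Submodule.span_induction with
  | mem x hx =>
    simp only [Set.mem_iUnion] at hx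
    obtain ⟨k, hx⟩ := hx
    exact eaWord_odd_anticomm hx ho'
  | zero => simp
  | add u v _ _ hu hv => rw [add_mul, hu, hv, mul_add]; abel
  | smul a u _ hu => rw [smul_mul_assoc, hu, mul_smul_comm]; simp

theorem eaO_sq_zero {o : ExteriorAlgebra R M} (ho : o ∈ eaO R M) (h2 : IsUnit (2 : R)) :
    o * o = 0 := by
  have h := eaO_anticomm ho ho
  have h3 : (2 : R) • (o * o) = 0 := by
    rw [two_smul]; nth_rewrite 1 [h]; simp
  obtain ⟨u, hu⟩ := h2
  have h4 : (u : R) • (o * o) = 0 := by rw [hu]; exact h3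
  calc o * o = (↑u⁻¹ : R) • ((u : R) • (o * o)) := by
        rw [smul_smul, Units.inv_mul, one_smul]
    _ = 0 := by rw [h4, smul_zero]

theorem eaB_pow_p {p : ℕ} [Fact p.Prime] [CharP (ExteriorAlgebra R M) p]
    {b : ExteriorAlgebra R M} (hb : b ∈ eaB R M) : b ^ p = 0 := by
  have hp2 : 2 ≤ p := (Fact.out : p.Prime).two_le
  induction hb using Submodule.span_induction with
  | mem x hx =>
    simp only [Set.mem_iUnion] at hx
    obtain ⟨k, hx⟩ := hx
    have hsq : x * x = 0 := eaWord_sq_zero (k := 2 * k + 1) hx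
    calc x ^ p = x * x * x ^ (p - 2) := by
          rw [← pow_two, ← pow_add]
          congr 1
          omega
      _ = 0 := by rw [hsq, zero_mul]
  | zero => rw [zero_pow]; omega
  | add u v hu hv hup hvp =>
    rw [add_pow_char_of_commute _ (eaB_central hu v), hup, hvp, add_zero]
  | smul a u _ hup => rw [smul_pow, hup, smul_zero]

/-- Decomposition of any element as scalar + even + odd. -/
theorem ea_decomp (x : ExteriorAlgebra R M) :
    ∃ (c : R) (b o : ExteriorAlgebra R M), b ∈ eaB R M ∧ o ∈ eaO R M ∧
      x = algebraMap R (ExteriorAlgebra R M) c + b + o := by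
  induction x using ExteriorAlgebra.induction with
  | algebraMap r => exact ⟨r, 0, 0, zero_mem _, zero_mem _, by simp⟩
  | ι m =>
    refine ⟨0, 0, ι R m, zero_mem _, ?_, by simp⟩
    exact Submodule.subset_span (Set.mem_iUnion.mpr ⟨0, ⟨[m], rfl, by simp⟩⟩)
  | add u v hu hv =>
    obtain ⟨c, b, o, hb, ho, rfl⟩ := hu
    obtain ⟨c', b', o', hb', ho', rfl⟩ := hv
    exact ⟨c + c', b + b', o + o', add_mem hb hb', add_mem ho ho', by rw [map_add]; abel⟩
  | mul u v hu hv =>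
    obtain ⟨c, b, o, hb, ho, rfl⟩ := hu
    obtain ⟨c', b', o', hb', ho', rfl⟩ := hv
    refine ⟨c * c', c • b' + c' • b + b * b' + o * o', c • o' + c' • o + b * o' + o * b',
      add_mem (add_mem (add_mem (smul_mem _ _ hb') (smul_mem _ _ hb)) (eaB_mul_eaB hb hb'))
        (eaO_mul_eaO ho ho'),
      add_mem (add_mem (add_mem (smul_mem _ _ ho') (smul_mem _ _ ho)) (eaB_mul_eaO hb ho'))
        (eaO_mul_eaB ho hb'), ?_⟩
    have hL : ∀ z : ExteriorAlgebra R M, algebraMap R _ c * z = c • z := fun z =>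
      (Algebra.smul_def c z).symm
    have hR : ∀ z : ExteriorAlgebra R M, z * algebraMap R _ c' = c' • z := fun z => by
      rw [← Algebra.commutes, ← Algebra.smul_def]
    rw [add_mul, add_mul, mul_add, mul_add, mul_add, mul_add, mul_add, mul_add,
      ← map_mul, hL, hL, hR, hR]
    abel

end GrassmannAux

/-- Over a finite field `F` with `q` elements and characteristic `p > 2`, the Grassmann
algebra `E` satisfies `x^{pq} = x^p` for every `x ∈ E`. -/
theorem grassmann_pow_pq_eq_pow_p (F : Type*) [Field F] [Fintype F]
    (p q : ℕ) (hq : q = Fintype.card F) [CharP F p] (hp : 2 < p)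
    (x : ExteriorAlgebra F (ℕ →₀ F)) :
    x ^ (p * q) = x ^ p := by
  haveI : Fact p.Prime :=
    ⟨(CharP.char_is_prime_or_zero F p).resolve_right (by omega)⟩
  haveI : CharP (ExteriorAlgebra F (ℕ →₀ F)) p :=
    charP_of_injective_algebraMap (ExteriorAlgebra.algebraMap_leftInverse _).injective p
  subst hq
  obtain ⟨c, b, o, hb, ho, rfl⟩ := ea_decomp x
  have hosq : o * o = 0 := by
    refine eaO_sq_zero ho (IsUnit.mk0 _ ?_)
    intro h2
    have hdvd : (p : ℕ) ∣ 2 := by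
      have h2' : (2 : F) = ((2 : ℕ) : F) := by norm_num
      exact (CharP.cast_eq_zero_iff F p 2).mp (by rw [← h2']; exact h2)
    have := Nat.le_of_dvd (by norm_num) hdvd
    omega
  have hbo : Commute b o := eaB_central hb o
  have hcomm : Commute (algebraMap F _ c) (b + o) := Algebra.commutes c (b + o)
  have hbpow : b ^ p = 0 := eaB_pow_p hb
  have hopow : o ^ p = 0 := by
    calc o ^ p = o * o * o ^ (p - 2) := by
          rw [← pow_two, ← pow_add]; congr 1; omega
      _ = 0 := by rw [hosq, zero_mul]
  have key : (algebraMap F (ExteriorAlgebra F (ℕ →₀ F)) c + b + o) ^ p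
      = algebraMap F (ExteriorAlgebra F (ℕ →₀ F)) (c ^ p) := by
    rw [add_assoc, add_pow_char_of_commute _ hcomm, add_pow_char_of_commute _ hbo,
      hbpow, hopow, add_zero, add_zero, map_pow]
  rw [pow_mul, key, ← map_pow, FiniteField.pow_card]
end

section
/- Let F be a finite field with q elements of characteristic p > 2 and E the infinite-dimensional Grassmann algebra. If f(y_1,...,y_n) is a commutative p-polynomial (each variable occurs in each monomial with exponent divisible by p and less than pq) that vanishes under all substitutions y_i ↦ elements of the even part E^0 of E, then f is the zero polynomial. -/
/-!
Substituting scalars `c i ∈ F ⊆ E⁰` shows that `f` vanishes on `Fⁿ`. Since every exponent of `f`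
is divisible by `p`, `f = g(y₁ᵖ, …, yₙᵖ)` for a polynomial `g` whose partial degrees are `< q`.
The Frobenius map is bijective on the finite field `F`, so `g` also vanishes on `Fⁿ`, and a
polynomial of partial degrees `< |F|` vanishing on `Fⁿ` is zero.
-/

namespace MvPolynomial

variable {R σ : Type*} [CommSemiring R]

theorem support_subset_of_mem_span_prod_X_pow [Fintype σ] (P : (σ → ℕ) → Prop)
    {f : MvPolynomial σ R} (hf : f ∈ Submodule.span R {m | ∃ a, P a ∧ m = ∏ i, X i ^ a i})
    {d : σ →₀ ℕ} (hd : d ∈ f.support) : P d := by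
  suffices Submodule.span R {m | ∃ a, P a ∧ m = ∏ i, X i ^ a i} ≤
      restrictSupport R {d : σ →₀ ℕ | P d} from this hf hd
  rw [restrictSupport_eq_span]
  refine Submodule.span_mono ?_
  rintro _ ⟨a, ha, rfl⟩
  refine ⟨Finsupp.indicator Finset.univ fun i _ => a i, ?_, (prod_X_pow a _).symm⟩
  have : ⇑(Finsupp.indicator Finset.univ fun i _ => a i) = a :=
    _root_.funext fun i => Finsupp.indicator_of_mem (Finset.mem_univ i) _
  simpa [this] using ha

theorem exists_expand_eq_of_dvd {p : ℕ} {f : MvPolynomial σ R}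
    (hf : ∀ d ∈ f.support, ∀ i, p ∣ d i) : ∃ g, expand p g = f := by
  rw [f.as_sum]
  refine Subalgebra.sum_mem (expand p).range fun d hd => ?_
  obtain ⟨e, rfl⟩ : ∃ e, p • e = d :=
    ⟨d.mapRange (· / p) (Nat.zero_div p), Finsupp.ext fun i => Nat.mul_div_cancel' (hf d hd i)⟩
  exact ⟨monomial e _, expand_monomial p e _⟩

theorem sum_coeff_smul_prod_ofFn_algebraMap_pow {A : Type*} [Semiring A] [Algebra R A] {n : ℕ}
    (f : MvPolynomial (Fin n) R) (c : Fin n → R) :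
    ∑ d ∈ f.support, f.coeff d • (List.ofFn fun i => algebraMap R A (c i) ^ d i).prod =
      algebraMap R A (eval c f) := by
  rw [eval_eq', map_sum]
  refine Finset.sum_congr rfl fun d _ => ?_
  have : (List.ofFn fun i => algebraMap R A (c i) ^ d i) =
      (List.ofFn fun i => c i ^ d i).map (algebraMap R A) := by
    simp [List.map_ofFn, Function.comp_def]
  rw [this, ← map_list_prod, List.prod_ofFn, Algebra.smul_def, map_mul]

section FiniteField

variable {K : Type*} [Field K] [Fintype K] [Finite σ]

theorem eq_zero_of_dvd_of_lt_of_forall_eval_eq_zero (p : ℕ) [CharP K p] {f : MvPolynomial σ K}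
    (hf : ∀ d ∈ f.support, ∀ i, p ∣ d i ∧ d i < p * Fintype.card K)
    (heval : ∀ x, eval x f = 0) : f = 0 := by
  classical
  have hp : Fact p.Prime := ⟨CharP.char_is_prime K p⟩
  obtain ⟨g, rfl⟩ := exists_expand_eq_of_dvd fun d hd i => (hf d hd i).1
  suffices g = 0 by rw [this, map_zero]
  refine eq_zero_of_eval_zero_at_prod_finset g (fun _ => Finset.univ) (fun i => ?_) fun x _ => ?_
  · rw [Finset.card_univ, degreeOf_lt_iff Fintype.card_pos]
    intro e he
    have hpe : p • e ∈ (expand p g).support := by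
      rw [support_expand _ hp.out.ne_zero]
      exact Finset.mem_image_of_mem _ he
    exact Nat.lt_of_mul_lt_mul_left (hf _ hpe i).2
  · obtain ⟨y, rfl⟩ : ∃ y, y ^ p = x :=
      ⟨fun i => (frobeniusEquiv K p).symm (x i),
        _root_.funext fun i => frobeniusEquiv_symm_pow_p K p (x i)⟩
    rw [← eval_expand, heval]

end FiniteField

end MvPolynomial

theorem ppoly_identity_is_zero_general (F : Type*) [Field F] [Fintype F] (p q n : ℕ)
    (hq : q = Fintype.card F) [CharP F p]
    (f : MvPolynomial (Fin n) F)
    (hppoly : f ∈ Submodule.span F {m : MvPolynomial (Fin n) F |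
      ∃ a : Fin n → ℕ, (∀ i, p ∣ a i ∧ a i < p * q) ∧
        m = ∏ i, MvPolynomial.X i ^ a i})
    (hvanish : ∀ σ : Fin n → ExteriorAlgebra F (ℕ →₀ F),
      (∀ i, σ i ∈ CliffordAlgebra.evenOdd (0 : QuadraticForm F (ℕ →₀ F)) 0) →
      ∑ d ∈ f.support, f.coeff d • (List.ofFn fun i => σ i ^ d i).prod = 0) :
    f = 0 := by
  subst hq
  refine MvPolynomial.eq_zero_of_dvd_of_lt_of_forall_eval_eq_zero p
    (fun d hd => MvPolynomial.support_subset_of_mem_span_prod_X_pow _ hppoly hd) fun c => ?_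
  have hscalar := hvanish (fun i => algebraMap F _ (c i)) fun i =>
    SetLike.algebraMap_mem_graded (CliffordAlgebra.evenOdd _) (c i)
  rwa [MvPolynomial.sum_coeff_smul_prod_ofFn_algebraMap_pow,
    ExteriorAlgebra.algebraMap_eq_zero_iff] at hscalar

/-- Over a finite field of characteristic `p > 2` with `q` elements, a commutative
`p`-polynomial (exponents divisible by `p` and `< pq`) which vanishes under all
substitutions into the even part `E⁰` of the Grassmann algebra is the zero polynomial. -/
theorem ppoly_identity_is_zero (F : Type*) [Field F] [Fintype F] (p q n : ℕ)
    (hq : q = Fintype.card F) [CharP F p] (hp : 2 < p)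
    (f : MvPolynomial (Fin n) F)
    (hppoly : f ∈ Submodule.span F {m : MvPolynomial (Fin n) F |
      ∃ a : Fin n → ℕ, (∀ i, p ∣ a i ∧ a i < p * q) ∧
        m = ∏ i, MvPolynomial.X i ^ a i})
    (hvanish : ∀ σ : Fin n → ExteriorAlgebra F (ℕ →₀ F),
      (∀ i, σ i ∈ CliffordAlgebra.evenOdd (0 : QuadraticForm F (ℕ →₀ F)) 0) →
      ∑ d ∈ f.support, f.coeff d • (List.ofFn fun i => σ i ^ d i).prod = 0) :
    f = 0 :=
  ppoly_identity_is_zero_general F p q n hq f hppoly hvanish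
end
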